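/- Let A be a Noetherian ring, let α, β be ideals, and let Z ⊆ W be closed subsets of Spec(A). Then (α + β)¬W = ((α¬Z) + β)¬W. -/

import Mathlib

open PrimeSpectrum

/-- The multiplicative set `S`: the complement of the union of the associated
primes `p` of `A ⧸ I` such that `V(p) ⊄ W`. -/
def gapMonoid {A : Type*} [CommRing A] (I : Ideal A) (W : Set (PrimeSpectrum A)) :
    Submonoid A where
  carrier := {s : A | ∀ p ∈ associatedPrimes A (A ⧸ I),
      ¬ PrimeSpectrum.zeroLocus (p : Set A) ⊆ W → s ∉ p}
  one_mem' := by
    intro p hp _ h1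
    exact hp.isPrime.ne_top ((Ideal.eq_top_iff_one p).mpr h1)
  mul_mem' := by
    intro a b ha hb p hp hW hab
    rcases hp.isPrime.mem_or_mem hab with h | h
    · exact ha p hp hW h
    · exact hb p hp hW h

/-- The gap ideal `I ¬ W := S⁻¹I ∩ A`. -/
def gapIdeal {A : Type*} [CommRing A] (I : Ideal A) (W : Set (PrimeSpectrum A)) :
    Ideal A :=
  (I.map (algebraMap A (Localization (gapMonoid I W)))).comap
    (algebraMap A (Localization (gapMonoid I W)))

section Aux

variable {A : Type*} [CommRing A] {M : Type*} [AddCommGroup M] [Module A M]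

/-- The saturation (w.r.t. the complement of a prime `q`) of the annihilator of `y`. -/
def satAnn (q : Ideal A) [q.IsPrime] (y : M) : Ideal A where
  carrier := {a | ∃ t ∉ q, (t * a) • y = 0}
  zero_mem' := ⟨1, q.primeCompl.one_mem, by simp⟩
  add_mem' := by
    rintro a b ⟨t, ht, hta⟩ ⟨u, hu, hub⟩
    refine ⟨t * u, fun h => ?_, ?_⟩
    · rcases (Ideal.IsPrime.mem_or_mem ‹q.IsPrime› h) with h' | h'
      exacts [ht h', hu h']
    · have h1 : t * u * (a + b) = u * (t * a) + t * (u * b) := by ring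
      rw [h1, add_smul, mul_smul u (t * a) y, mul_smul t (u * b) y, hta, hub, smul_zero, smul_zero, add_zero]
  smul_mem' := by
    rintro c a ⟨t, ht, hta⟩
    refine ⟨t, ht, ?_⟩
    have h1 : t * (c • a) = c * (t * a) := by rw [smul_eq_mul]; ring
    rw [h1, mul_smul, hta, smul_zero]

theorem satAnn_le {q : Ideal A} [q.IsPrime] {y : M} (h : satAnn q y ≠ ⊤) :
    satAnn q y ≤ q := by
  intro a ha
  by_contra haq
  obtain ⟨t, ht, hta⟩ := ha
  refine h ((Ideal.eq_top_iff_one _).mpr ⟨t * a, fun hmem => ?_, by simpa using hta⟩)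
  rcases Ideal.IsPrime.mem_or_mem ‹q.IsPrime› hmem with h' | h'
  exacts [ht h', haq h']

/-- In a Noetherian ring, for any prime `q` containing the annihilator of `x`, there is an
associated prime `p` of `M` with `Ann(x) ≤ p ≤ q`. -/
theorem exists_assoc_between [IsNoetherianRing A] (q : Ideal A) (hq : q.IsPrime) (x : M)
    (hx : (Submodule.span A {x}).annihilator ≤ q) :
    ∃ p, IsAssociatedPrime p M ∧ (Submodule.span A {x}).annihilator ≤ p ∧ p ≤ q := by
  haveI := hq
  have hone : (1 : A) ∉ q := fun h => hq.ne_top ((Ideal.eq_top_iff_one _).mpr h)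
  set 𝒮 : Set (Ideal A) := {J | ∃ c : A, J = satAnn q (c • x) ∧ J ≠ ⊤} with h𝒮
  have hproper : satAnn q ((1 : A) • x) ≠ ⊤ := by
    intro htop
    have h1 : (1 : A) ∈ satAnn q ((1 : A) • x) := htop ▸ Submodule.mem_top
    obtain ⟨t, ht, hta⟩ := h1
    simp only [mul_one, smul_smul] at hta
    exact ht (hx ((Submodule.mem_annihilator_span_singleton _ _).mpr hta))
  have hne : 𝒮.Nonempty := ⟨satAnn q ((1 : A) • x), 1, rfl, hproper⟩
  obtain ⟨J, hJ𝒮, hJmax⟩ :=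
    (set_has_maximal_iff_noetherian.mpr (by infer_instance : IsNoetherian A A)) 𝒮 hne
  obtain ⟨c, rfl, hJtop⟩ := hJ𝒮
  set p := satAnn q (c • x) with hp
  have hple : p ≤ q := satAnn_le hJtop
  have hprime : p.IsPrime := by
    refine ⟨hJtop, ?_⟩
    intro a b hab
    by_cases hb : b ∈ p
    · exact Or.inr hb
    · left
      have hsub : p ≤ satAnn q ((b * c) • x) := by
        rintro a' ⟨t, ht, hta⟩
        refine ⟨t, ht, ?_⟩
        simp only [smul_smul] at hta ⊢
        have h1 : t * a' * (b * c) = b * (t * a' * c) := by ring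
        rw [h1, mul_smul, hta, smul_zero]
      have hbtop : satAnn q ((b * c) • x) ≠ ⊤ := by
        intro htop
        have h1 : (1 : A) ∈ satAnn q ((b * c) • x) := htop ▸ Submodule.mem_top
        obtain ⟨t, ht, hta⟩ := h1
        refine hb ⟨t, ht, ?_⟩
        simp only [smul_smul] at hta ⊢
        have h2 : t * b * c = t * 1 * (b * c) := by ring
        rw [h2]; exact hta
      have heq : satAnn q ((b * c) • x) = p :=
        (eq_or_lt_of_le hsub).elim Eq.symm fun h => absurd h (hJmax _ ⟨b * c, rfl, hbtop⟩)
      rw [← heq]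
      obtain ⟨t, ht, hta⟩ := hab
      refine ⟨t, ht, ?_⟩
      simp only [smul_smul] at hta ⊢
      have h3 : t * a * (b * c) = t * (a * b) * c := by ring
      rw [h3]; exact hta
  have hannle : (Submodule.span A {x}).annihilator ≤ p := by
    intro a ha
    rw [Submodule.mem_annihilator_span_singleton] at ha
    refine ⟨1, hone, ?_⟩
    rw [smul_smul]
    have h4 : 1 * a * c = c * a := by ring
    rw [h4, mul_smul, ha, smul_zero]
  set 𝒯 : Set (Ideal A) := {J | ∃ t : A, t ∉ q ∧ J = (Submodule.span A {t • c • x}).annihilator}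
    with h𝒯
  have hTne : 𝒯.Nonempty := ⟨_, 1, hone, rfl⟩
  obtain ⟨J₀, hJ₀, hJ₀max⟩ :=
    (set_has_maximal_iff_noetherian.mpr (by infer_instance : IsNoetherian A A)) 𝒯 hTne
  obtain ⟨t₀, ht₀, rfl⟩ := hJ₀
  have hJ₀p : (Submodule.span A {t₀ • c • x}).annihilator = p := by
    apply le_antisymm
    · intro a ha
      rw [Submodule.mem_annihilator_span_singleton] at ha
      refine ⟨t₀, ht₀, ?_⟩
      simp only [smul_smul] at ha ⊢
      have h5 : t₀ * a * c = a * (t₀ * c) := by ring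
      rw [h5]; exact ha
    · rintro a ⟨t, ht, hta⟩
      have hle : (Submodule.span A {t₀ • c • x}).annihilator ≤
          (Submodule.span A {(t * t₀) • c • x}).annihilator := by
        intro b hb
        rw [Submodule.mem_annihilator_span_singleton] at hb ⊢
        simp only [smul_smul] at hb ⊢
        have h6 : b * (t * t₀ * c) = t * (b * (t₀ * c)) := by ring
        rw [h6, mul_smul, hb, smul_zero]
      have htt₀ : t * t₀ ∉ q := fun h => by
        rcases Ideal.IsPrime.mem_or_mem ‹q.IsPrime› h with h' | h'
        exacts [ht h', ht₀ h']
      have heq := (eq_or_lt_of_le hle).elim Eq.symm fun h =>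
        absurd h (hJ₀max _ ⟨t * t₀, htt₀, rfl⟩)
      have ha' : a ∈ (Submodule.span A {(t * t₀) • c • x}).annihilator := by
        rw [Submodule.mem_annihilator_span_singleton]
        simp only [smul_smul] at hta ⊢
        have h7 : a * (t * t₀ * c) = t₀ * (t * a * c) := by ring
        rw [h7, mul_smul, hta, smul_zero]
      rwa [heq] at ha'
  exact ⟨p, isAssociatedPrime_iff.mpr ⟨hprime, t₀ • c • x, by rw [Submodule.bot_colon']; exact hJ₀p.symm⟩, hannle, hple⟩


theorem assoc_step [IsNoetherianRing A] {p : Ideal A} (hp : p.IsPrime) (x : M)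
    (hx : (Submodule.span A {x}).annihilator = p) {q : Ideal A} (hq : IsAssociatedPrime q M) :
    q = p ∨ IsAssociatedPrime q (M ⧸ Submodule.span A {x}) := by
  obtain ⟨hq1, y, hy⟩ := isAssociatedPrime_iff.mp hq
  rw [Submodule.bot_colon'] at hy
  by_cases hJ : ∀ a : A, a • y ∈ Submodule.span A {x} → a ∈ q
  · right
    refine isAssociatedPrime_iff.mpr ⟨hq1, Submodule.Quotient.mk y, ?_⟩
    rw [Submodule.bot_colon', hy]
    ext a
    simp only [Submodule.mem_annihilator_span_singleton, ← Submodule.Quotient.mk_smul,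
      Submodule.Quotient.mk_eq_zero]
    constructor
    · intro h; rw [h]; exact Submodule.zero_mem _
    · intro h
      have := hJ a h
      rw [hy, Submodule.mem_annihilator_span_singleton] at this
      exact this
  · push_neg at hJ
    obtain ⟨c, hcy, hcq⟩ := hJ
    left
    obtain ⟨d, hd⟩ := Submodule.mem_span_singleton.mp hcy
    have hdp : d ∉ p := by
      intro hdP
      rw [← hx, Submodule.mem_annihilator_span_singleton] at hdP
      rw [hdP] at hd
      have : c ∈ q := by
        rw [hy, Submodule.mem_annihilator_span_singleton, ← hd]
      exact hcq this
    ext a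
    constructor
    · intro haq
      have h1 : (a * c) • y = 0 := by
        have : a * c ∈ q := Ideal.mul_mem_right _ _ haq
        rwa [hy, Submodule.mem_annihilator_span_singleton] at this
      rw [← smul_smul, ← hd, smul_smul] at h1
      have : a * d ∈ p := by
        rw [← hx, Submodule.mem_annihilator_span_singleton]; exact h1
      rcases hp.mem_or_mem this with h' | h'
      · exact h'
      · exact absurd h' hdp
    · intro hap
      have h1 : (a * d) • x = 0 := by
        have : a * d ∈ p := Ideal.mul_mem_right _ _ hap
        rwa [← hx, Submodule.mem_annihilator_span_singleton] at this
      rw [← smul_smul, hd, smul_smul] at h1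
      have : a * c ∈ q := by
        rw [hy, Submodule.mem_annihilator_span_singleton]; exact h1
      rcases hq1.mem_or_mem this with h' | h'
      · exact h'
      · exact absurd h' hcq

theorem ass_quot_finite [IsNoetherianRing A] [Module.Finite A M] (N : Submodule A M) :
    (associatedPrimes A (M ⧸ N)).Finite := by
  haveI : IsNoetherian A M := isNoetherian_of_isNoetherianRing_of_finite A M
  induction N using IsNoetherian.induction with
  | _ N IH =>
    by_cases hN : N = ⊤
    · subst hN
      haveI : Subsingleton (M ⧸ (⊤ : Submodule A M)) :=
        Submodule.Quotient.subsingleton_iff.mpr rfl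
      rw [associatedPrimes.eq_empty_of_subsingleton]
      exact Set.finite_empty
    · haveI : Nontrivial (M ⧸ N) := Submodule.Quotient.nontrivial_iff.mpr hN
      obtain ⟨p, hp⟩ := associatedPrimes.nonempty A (M ⧸ N)
      obtain ⟨hp1, x, hx⟩ := isAssociatedPrime_iff.mp (AssociatedPrimes.mem_iff.mp hp)
      rw [Submodule.bot_colon'] at hx
      have hx0 : x ≠ 0 := by
        intro h
        rw [h] at hx
        apply hp1.ne_top
        rw [hx, Ideal.eq_top_iff_one, Submodule.mem_annihilator_span_singleton, smul_zero]
      set N' := Submodule.comap N.mkQ (Submodule.span A {x}) with hN'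
      have hle : N ≤ N' := by
        intro m hm
        simp only [hN', Submodule.mem_comap]
        have : N.mkQ m = 0 := by
          rw [Submodule.mkQ_apply, Submodule.Quotient.mk_eq_zero]; exact hm
        rw [this]; exact Submodule.zero_mem _
      have hlt : N < N' := by
        obtain ⟨m, hm⟩ := N.mkQ_surjective x
        refine lt_of_le_of_ne hle (fun h => ?_)
        have hmN' : m ∈ N' := by
          simp only [hN', Submodule.mem_comap, hm]
          exact Submodule.mem_span_singleton_self x
        rw [← h] at hmN'
        apply hx0
        rw [← hm, Submodule.mkQ_apply, Submodule.Quotient.mk_eq_zero]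
        exact hmN'
      have hfin' := IH N' hlt
      have hmap : Submodule.map N.mkQ N' = Submodule.span A {x} :=
        Submodule.map_comap_eq_of_surjective N.mkQ_surjective _
      have e₂ : ((M ⧸ N) ⧸ (Submodule.span A {x} : Submodule A (M ⧸ N))) ≃ₗ[A] M ⧸ N' :=
        (Submodule.quotEquivOfEq _ _ hmap.symm).trans
          (Submodule.quotientQuotientEquivQuotient N N' hle)
      apply Set.Finite.subset (hfin'.insert p)
      intro Q hQ
      rcases assoc_step hp1 x hx.symm hQ with h | h
      · exact Set.mem_insert_iff.mpr (Or.inl h)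
      · refine Set.mem_insert_iff.mpr (Or.inr ?_)
        have := LinearEquiv.AssociatedPrimes.eq e₂
        rw [← this]
        exact h

end Aux

section GapLemmas

variable {A : Type*} [CommRing A]

theorem mem_gapIdeal_iff (I : Ideal A) (W : Set (PrimeSpectrum A)) (a : A) :
    a ∈ gapIdeal I W ↔ ∃ s ∈ gapMonoid I W, s * a ∈ I := by
  constructor
  · intro h
    rw [gapIdeal, Ideal.mem_comap] at h
    obtain ⟨⟨⟨i, hi⟩, s⟩, hs⟩ :=
      (IsLocalization.mem_map_algebraMap_iff (gapMonoid I W)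
        (Localization (gapMonoid I W))).mp h
    rw [← map_mul, IsLocalization.eq_iff_exists (gapMonoid I W)] at hs
    obtain ⟨c, hc⟩ := hs
    refine ⟨(c : A) * (s : A), (c * s).2, ?_⟩
    have h1 : (c : A) * (s : A) * a = (c : A) * (a * (s : A)) := by ring
    rw [h1]
    simp only at hc
    rw [hc]
    exact I.mul_mem_left _ hi
  · rintro ⟨s, hs, h⟩
    rw [gapIdeal, Ideal.mem_comap]
    refine (IsLocalization.mem_map_algebraMap_iff (gapMonoid I W)
      (Localization (gapMonoid I W))).mpr ⟨⟨⟨s * a, h⟩, ⟨s, hs⟩⟩, ?_⟩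
    simp only [← map_mul]
    rw [mul_comm]

theorem mem_colon_span {N : Ideal A} {x r : A} : r ∈ N.colon (Ideal.span {x}) ↔ r * x ∈ N := by
  rw [Ideal.span, Submodule.mem_colon_span_singleton, smul_eq_mul]

theorem colon_eq_annihilator (I : Ideal A) (a : A) :
    I.colon (Ideal.span {a}) =
      (Submodule.span A {(Ideal.Quotient.mk I a : A ⧸ I)}).annihilator := by
  ext r
  rw [Submodule.mem_annihilator_span_singleton, mem_colon_span]
  rw [← Ideal.Quotient.mk_eq_mk, ← Submodule.Quotient.mk_smul, smul_eq_mul,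
    Submodule.Quotient.mk_eq_zero]

theorem mem_gapIdeal_iff_zeroLocus [IsNoetherianRing A] (I : Ideal A)
    (W : Set (PrimeSpectrum A)) (a : A) :
    a ∈ gapIdeal I W ↔ zeroLocus ((I.colon (Ideal.span {a})) : Set A) ⊆ W := by
  rw [mem_gapIdeal_iff]
  constructor
  · rintro ⟨s, hs, hsa⟩ π hπ
    by_contra hπW
    have hcol : I.colon (Ideal.span {a}) ≤ π.asIdeal := (mem_zeroLocus _ _).mp hπ
    rw [colon_eq_annihilator] at hcol
    obtain ⟨p, hpAss, hple, hpq⟩ :=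
      exists_assoc_between π.asIdeal π.isPrime (Ideal.Quotient.mk I a) hcol
    have hbad : ¬ zeroLocus (p : Set A) ⊆ W := by
      intro hsub
      exact hπW (hsub ((mem_zeroLocus _ _).mpr hpq))
    refine hs p hpAss hbad (hple ?_)
    rw [← colon_eq_annihilator]
    exact mem_colon_span.mpr hsa
  · intro h
    set T : Set (Ideal A) :=
      {p | p ∈ associatedPrimes A (A ⧸ I) ∧ ¬ zeroLocus (p : Set A) ⊆ W} with hT'
    have hT : T.Finite := (ass_quot_finite (A := A) (M := A) I).subset fun p hp => hp.1
    have hnot : ¬ ((I.colon (Ideal.span {a}) : Set A) ⊆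
        ⋃ p ∈ (hT.toFinset : Set (Ideal A)), (p : Set A)) := by
      rw [Ideal.subset_union_prime (⊤ : Ideal A) (⊤ : Ideal A) ?_]
      · rintro ⟨p, hpT, hle⟩
        have hp' := hT.mem_toFinset.mp hpT
        obtain ⟨π, hπ1, hπ2⟩ := Set.not_subset.mp hp'.2
        refine hπ2 (h ?_)
        rw [mem_zeroLocus] at hπ1 ⊢
        exact fun y hy => hπ1 (hle hy)
      · intro p hpT _ _
        exact (hT.mem_toFinset.mp hpT).1.isPrime
    obtain ⟨s, hs1, hs2⟩ := Set.not_subset.mp hnot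
    have hsI : s * a ∈ I := mem_colon_span.mp hs1
    refine ⟨s, ?_, hsI⟩
    intro p hpAss hbad hsp
    exact hs2 (Set.mem_biUnion (hT.mem_toFinset.mpr ⟨hpAss, hbad⟩) hsp)

end GapLemmas

/-- Lemma 1.3.ii: `(α + β) ¬ W = ((α ¬ Z) + β) ¬ W` for closed sets `Z ⊆ W`. -/
theorem gapIdeal_add {A : Type*} [CommRing A] [IsNoetherianRing A]
    (α β : Ideal A) (Z W : Set (PrimeSpectrum A))
    (hZ : IsClosed Z) (hW : IsClosed W) (hZW : Z ⊆ W) :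
    gapIdeal (α + β) W = gapIdeal (gapIdeal α Z + β) W := by
  have hαle : α ≤ gapIdeal α Z := Ideal.le_comap_map
  have hle : α + β ≤ gapIdeal α Z + β := sup_le_sup_right hαle β
  ext x
  rw [mem_gapIdeal_iff_zeroLocus, mem_gapIdeal_iff_zeroLocus]
  constructor
  · intro h
    refine fun π hπ => h ?_
    rw [mem_zeroLocus] at hπ ⊢
    refine fun y hy => hπ ?_
    exact mem_colon_span.mpr (hle (mem_colon_span.mp hy))
  · intro h π hπ
    by_contra hπW
    have hπZ : π ∉ Z := fun h' => hπW (hZW h')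
    have hcol : (gapIdeal α Z + β).colon (Ideal.span {x}) ≤ π.asIdeal := by
      intro y hy
      have h1 : y * x ∈ gapIdeal α Z + β := mem_colon_span.mp hy
      obtain ⟨g, hg, b, hb, hgb⟩ := Submodule.mem_sup.mp h1
      have hgZ := (mem_gapIdeal_iff_zeroLocus α Z g).mp hg
      have hnle : ¬ (α.colon (Ideal.span {g}) ≤ π.asIdeal) := by
        intro hle'
        exact hπZ (hgZ ((mem_zeroLocus _ _).mpr hle'))
      obtain ⟨t, ht1, ht2⟩ := SetLike.not_le_iff_exists.mp hnle
      have htg : t * g ∈ α := mem_colon_span.mp ht1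
      have hty : t * y ∈ (α + β).colon (Ideal.span {x}) := by
        refine mem_colon_span.mpr ?_
        have h2 : t * y * x = t * g + t * b := by rw [mul_assoc, ← hgb]; ring
        rw [h2]
        exact Submodule.add_mem_sup htg (Ideal.mul_mem_left _ t hb)
      have hmem : t * y ∈ π.asIdeal := (mem_zeroLocus _ _).mp hπ hty
      rcases π.isPrime.mem_or_mem hmem with h' | h'
      · exact absurd h' ht2
      · exact h'
    exact hπW (h ((mem_zeroLocus _ _).mpr hcol))
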